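/- arXiv:1308.5407 — 2 statements merged into one kernel-verified Lean document; each statement's English description precedes it below -/
import Mathlib

section
/- Let (A,d) be a nonempty compact metric space. Then the function t ↦ (|tA|_+)^{1/t} is nonincreasing on (0,∞): for all 0 < s ≤ t, (|tA|_+)^{1/t} ≤ (|sA|_+)^{1/s}. Consequently, t ↦ log(2·|tA|_+)/t is strictly decreasing on (0,∞). -/
open MeasureTheory Filter
open scoped ENNReal Topology

noncomputable section

/-- The maximum diversity `|tA|₊` of a compact metric space `A`: the supremum over Borel
probability measures `μ` on `A` of `(∫∫ e^{-t d(a,b)} dμ dμ)⁻¹`. -/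
def maxDiv (A : Type*) [MetricSpace A] [MeasurableSpace A] (t : ℝ) : ℝ≥0∞ :=
  ⨆ μ : ProbabilityMeasure A,
    (∫⁻ a, ∫⁻ b, ENNReal.ofReal (Real.exp (-t * dist a b))
      ∂(μ : Measure A) ∂(μ : Measure A))⁻¹

/-- The covering number `N(A,ε)`: the smallest `m` such that `A` is covered by `m` closed
balls of radius `ε` centered at points of `A`. -/
def coveringNumber (A : Type*) [MetricSpace A] (ε : ℝ) : ℕ :=
  sInf {m : ℕ | ∃ s : Finset A, s.card = m ∧ ∀ a : A, ∃ c ∈ s, dist a c ≤ ε}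

/-- The packing number `M(A,ε)`: the largest `m` such that there are `m` points of `A`
whose closed balls of radius `ε` are pairwise disjoint. -/
def packingNumber (A : Type*) [MetricSpace A] (ε : ℝ) : ℕ :=
  sSup {m : ℕ | ∃ x : Fin m → A, Pairwise fun j k =>
    Disjoint (Metric.closedBall (x j) ε) (Metric.closedBall (x k) ε)}

/-- The upper Minkowski dimension `limsup_{ε→0⁺} log N(A,ε)/log(1/ε)`, in `[0,∞]`. -/
def upperMinkowski (A : Type*) [MetricSpace A] : ℝ≥0∞ :=
  limsup (fun ε : ℝ =>
    ENNReal.ofReal (Real.log (coveringNumber A ε) / Real.log (1 / ε))) (𝓝[>] 0)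

/-- The lower Minkowski dimension `liminf_{ε→0⁺} log N(A,ε)/log(1/ε)`, in `[0,∞]`. -/
def lowerMinkowski (A : Type*) [MetricSpace A] : ℝ≥0∞ :=
  liminf (fun ε : ℝ =>
    ENNReal.ofReal (Real.log (coveringNumber A ε) / Real.log (1 / ε))) (𝓝[>] 0)


/-! For a probability measure `μ` and `1 ≤ t / s`, Jensen's inequality for the convex function
`x ↦ x ^ (t / s)` applied to `e^{-s d}` under `μ ⊗ μ` gives
`(∫∫ e^{-s d} dμ dμ) ^ (t / s) ≤ ∫∫ e^{-t d} dμ dμ`. Inverting and taking the supremum over `μ`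
yields `|tA|₊ ≤ |sA|₊ ^ (t / s)`, which is the monotonicity of `t ↦ |tA|₊ ^ (1 / t)`. Since
`|tA|₊` is finite and at least `1`, taking logarithms gives that `log |tA|₊ / t` is nonincreasing,
and adding the strictly decreasing `log 2 / t` makes the sum strictly decreasing. -/

theorem rpow_lintegral_le_lintegral_rpow {α : Type*} [MeasurableSpace α] (ν : Measure α)
    [IsProbabilityMeasure ν] {g : α → ℝ≥0∞} (hg : AEMeasurable g ν) {p : ℝ} (hp : 1 ≤ p) :
    (∫⁻ a, g a ∂ν) ^ p ≤ ∫⁻ a, g a ^ p ∂ν := by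
  rcases hp.eq_or_lt with rfl | hp
  · simp
  have hp₀ : 0 < p := one_pos.trans hp
  -- Hölder's inequality against the constant function `1`
  have holder := ENNReal.lintegral_mul_le_Lp_mul_Lq ν (Real.HolderConjugate.conjExponent hp) hg
    (aemeasurable_const (b := (1 : ℝ≥0∞)))
  simp only [Pi.mul_apply, mul_one, ENNReal.one_rpow, lintegral_one, measure_univ] at holder
  calc (∫⁻ a, g a ∂ν) ^ p ≤ ((∫⁻ a, g a ^ p ∂ν) ^ (1 / p)) ^ p :=
        ENNReal.rpow_le_rpow holder hp₀.le
    _ = ∫⁻ a, g a ^ p ∂ν := by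
        rw [← ENNReal.rpow_mul, one_div_mul_cancel hp₀.ne', ENNReal.rpow_one]

section SimilarityIntegral

variable {A : Type*} [PseudoMetricSpace A]

theorem continuous_ofReal_exp_neg_mul_dist (t : ℝ) :
    Continuous fun p : A × A => ENNReal.ofReal (Real.exp (-t * dist p.1 p.2)) :=
  ENNReal.continuous_ofReal.comp (Real.continuous_exp.comp (continuous_const.mul continuous_dist))

variable [MeasurableSpace A]

def similarityIntegral (μ : Measure A) (t : ℝ) : ℝ≥0∞ :=
  ∫⁻ a, ∫⁻ b, ENNReal.ofReal (Real.exp (-t * dist a b)) ∂μ ∂μ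

theorem similarityIntegral_eq_lintegral_prod [OpensMeasurableSpace A] [SecondCountableTopology A]
    (μ : Measure A) [SFinite μ] (t : ℝ) :
    similarityIntegral μ t = ∫⁻ p, ENNReal.ofReal (Real.exp (-t * dist p.1 p.2)) ∂μ.prod μ :=
  (lintegral_prod _ (continuous_ofReal_exp_neg_mul_dist t).measurable.aemeasurable).symm

theorem similarityIntegral_rpow_le [OpensMeasurableSpace A] [SecondCountableTopology A]
    (μ : Measure A) [IsProbabilityMeasure μ] {s t : ℝ} (hs : 0 < s) (hst : s ≤ t) :
    similarityIntegral μ s ^ (t / s) ≤ similarityIntegral μ t := by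
  have hpow : ∀ p : A × A, ENNReal.ofReal (Real.exp (-s * dist p.1 p.2)) ^ (t / s)
      = ENNReal.ofReal (Real.exp (-t * dist p.1 p.2)) := fun p => by
    rw [ENNReal.ofReal_rpow_of_pos (Real.exp_pos _), ← Real.exp_mul]
    congr 2
    field_simp
  rw [similarityIntegral_eq_lintegral_prod, similarityIntegral_eq_lintegral_prod]
  calc _ ≤ ∫⁻ p, ENNReal.ofReal (Real.exp (-s * dist p.1 p.2)) ^ (t / s) ∂μ.prod μ :=
        rpow_lintegral_le_lintegral_rpow _
          (continuous_ofReal_exp_neg_mul_dist s).measurable.aemeasurable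
          ((one_le_div hs).2 hst)
    _ = _ := lintegral_congr fun p => hpow p

theorem similarityIntegral_le_one (μ : Measure A) [IsProbabilityMeasure μ] {t : ℝ} (ht : 0 ≤ t) :
    similarityIntegral μ t ≤ 1 := by
  have hle : ∀ a b : A, ENNReal.ofReal (Real.exp (-t * dist a b)) ≤ 1 := fun a b => by
    rw [ENNReal.ofReal_le_one, Real.exp_le_one_iff, neg_mul, neg_nonpos]
    positivity
  calc similarityIntegral μ t ≤ ∫⁻ _, ∫⁻ _, 1 ∂μ ∂μ :=
        lintegral_mono fun a => lintegral_mono fun b => hle a b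
    _ = 1 := by simp

theorem ofReal_exp_le_similarityIntegral [BoundedSpace A] (μ : Measure A)
    [IsProbabilityMeasure μ] (t : ℝ) :
    ENNReal.ofReal (Real.exp (-(|t| * Metric.diam (Set.univ : Set A))))
      ≤ similarityIntegral μ t := by
  have hge : ∀ a b : A, ENNReal.ofReal (Real.exp (-(|t| * Metric.diam (Set.univ : Set A))))
      ≤ ENNReal.ofReal (Real.exp (-t * dist a b)) := fun a b => by
    have hd := Metric.dist_le_diam_of_mem (Bornology.isBounded_univ.2 ‹_›)
      (Set.mem_univ a) (Set.mem_univ b)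
    have ht : t * dist a b ≤ |t| * Metric.diam (Set.univ : Set A) :=
      (mul_le_mul_of_nonneg_right (le_abs_self t) dist_nonneg).trans
        (mul_le_mul_of_nonneg_left hd (abs_nonneg t))
    exact ENNReal.ofReal_le_ofReal (Real.exp_le_exp.2 (by linarith))
  calc _ = ∫⁻ _, ∫⁻ _, ENNReal.ofReal (Real.exp (-(|t| * Metric.diam (Set.univ : Set A))))
          ∂μ ∂μ := by simp
    _ ≤ similarityIntegral μ t := lintegral_mono fun a => lintegral_mono fun b => hge a b

end SimilarityIntegral

section MaxDiv

variable (A : Type*) [MetricSpace A] [MeasurableSpace A]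

theorem maxDiv_eq_iSup_similarityIntegral (t : ℝ) :
    maxDiv A t = ⨆ μ : ProbabilityMeasure A, (similarityIntegral (μ : Measure A) t)⁻¹ :=
  rfl

theorem maxDiv_le_rpow [OpensMeasurableSpace A] [SecondCountableTopology A] {s t : ℝ} (hs : 0 < s)
    (hst : s ≤ t) : maxDiv A t ≤ maxDiv A s ^ (t / s) := by
  rw [maxDiv_eq_iSup_similarityIntegral]
  refine iSup_le fun μ => ?_
  calc (similarityIntegral (μ : Measure A) t)⁻¹
      ≤ (similarityIntegral (μ : Measure A) s ^ (t / s))⁻¹ :=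
        ENNReal.inv_le_inv.2 (similarityIntegral_rpow_le _ hs hst)
    _ = (similarityIntegral (μ : Measure A) s)⁻¹ ^ (t / s) := (ENNReal.inv_rpow _ _).symm
    _ ≤ maxDiv A s ^ (t / s) := ENNReal.rpow_le_rpow (le_iSup (fun ν : ProbabilityMeasure A =>
        (similarityIntegral (ν : Measure A) s)⁻¹) μ) (div_pos (hs.trans_le hst) hs).le

theorem maxDiv_rpow_one_div_le [OpensMeasurableSpace A] [SecondCountableTopology A] {s t : ℝ}
    (hs : 0 < s) (hst : s ≤ t) : maxDiv A t ^ (1 / t) ≤ maxDiv A s ^ (1 / s) := by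
  have ht : 0 < t := hs.trans_le hst
  calc maxDiv A t ^ (1 / t) ≤ (maxDiv A s ^ (t / s)) ^ (1 / t) :=
        ENNReal.rpow_le_rpow (maxDiv_le_rpow A hs hst) (by positivity)
    _ = maxDiv A s ^ (1 / s) := by
        rw [← ENNReal.rpow_mul]
        congr 1
        field_simp

theorem one_le_maxDiv [Nonempty A] {t : ℝ} (ht : 0 ≤ t) : 1 ≤ maxDiv A t := by
  let δ : ProbabilityMeasure A := ⟨Measure.dirac (Classical.arbitrary A), inferInstance⟩
  calc 1 ≤ (similarityIntegral (δ : Measure A) t)⁻¹ :=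
        ENNReal.one_le_inv.2 (similarityIntegral_le_one _ ht)
    _ ≤ maxDiv A t := le_iSup (fun μ : ProbabilityMeasure A =>
        (similarityIntegral (μ : Measure A) t)⁻¹) δ

theorem maxDiv_ne_top [BoundedSpace A] (t : ℝ) : maxDiv A t ≠ ⊤ := by
  refine ne_top_of_le_ne_top (ENNReal.inv_ne_top.2 (ENNReal.ofReal_pos.2 (Real.exp_pos
    (-(|t| * Metric.diam (Set.univ : Set A))))).ne') (iSup_le fun μ => ?_)
  exact ENNReal.inv_le_inv.2 (ofReal_exp_le_similarityIntegral _ t)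

end MaxDiv

theorem ENNReal.log_toReal_div_le_of_rpow_one_div_le {x y : ℝ≥0∞} (hx : 0 < x.toReal)
    (hy : 0 < y.toReal) {s t : ℝ} (hs : 0 < s) (hxy : x ^ (1 / t) ≤ y ^ (1 / s)) :
    Real.log x.toReal / t ≤ Real.log y.toReal / s := by
  have hxy' : x.toReal ^ (1 / t) ≤ y.toReal ^ (1 / s) := by
    rw [ENNReal.toReal_rpow, ENNReal.toReal_rpow]
    exact ENNReal.toReal_mono
      (ENNReal.rpow_ne_top_of_nonneg (by positivity) (ENNReal.toReal_pos_iff.1 hy).2.ne) hxy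
  have hlog := Real.log_le_log (by positivity) hxy'
  rwa [Real.log_rpow hx, Real.log_rpow hy, one_div_mul_eq_div, one_div_mul_eq_div] at hlog

/-- For a nonempty compact metric space `A`, the function
`t ↦ (|tA|₊)^{1/t}` is nonincreasing on `(0,∞)`; consequently
`t ↦ log(2|tA|₊)/t` is strictly decreasing on `(0,∞)`. -/
theorem stmt15 (A : Type*) [MetricSpace A] [MeasurableSpace A] [BorelSpace A]
    [CompactSpace A] [Nonempty A] :
    (∀ s t : ℝ, 0 < s → s ≤ t → (maxDiv A t) ^ (1 / t) ≤ (maxDiv A s) ^ (1 / s)) ∧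
    (∀ s t : ℝ, 0 < s → s < t →
      Real.log (2 * (maxDiv A t).toReal) / t < Real.log (2 * (maxDiv A s).toReal) / s) := by
  refine ⟨fun s t hs hst => maxDiv_rpow_one_div_le A hs hst, fun s t hs hst => ?_⟩
  have ht : 0 < t := hs.trans hst
  have hpos : ∀ r : ℝ, 0 < r → 0 < (maxDiv A r).toReal := fun r hr =>
    ENNReal.toReal_pos (one_pos.trans_le (one_le_maxDiv A hr.le)).ne' (maxDiv_ne_top A r)
  rw [Real.log_mul two_ne_zero (hpos t ht).ne', Real.log_mul two_ne_zero (hpos s hs).ne',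
    add_div, add_div]
  exact add_lt_add_of_lt_of_le (div_lt_div_of_pos_left (Real.log_pos one_lt_two) hs hst)
    (ENNReal.log_toReal_div_le_of_rpow_one_div_le (hpos t ht) (hpos s hs) hs
      (maxDiv_rpow_one_div_le A hs hst.le))
end
end

section
/- Let (A,d) be a nonempty compact metric space that is homogeneous, i.e. for all a, b ∈ A there exists an isometric bijection f : A → A with f(a) = b, and let μ be a Borel probability measure on A that is invariant under every isometric bijection of A (the pushforward of μ under every such map equals μ). For t > 0 and a ∈ A define m_a(t) := ( ∫_A e^{-t·d(a,b)} dμ(b) )^{-1}. Then for every a ∈ A, limsup_{t→∞} log m_a(t)/log t equals the upper Minkowski dimension of A and liminf_{t→∞} log m_a(t)/log t equals the lower Minkowski dimension of A. -/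
/-!
Homogeneity and invariance make `μ` uniformly distributed: all closed balls of radius `r` have
the same measure `V(r)`. A minimal `ε`-cover gives `V(ε) ≥ 1/N(ε)`, and the disjoint `ε`-balls
around a maximal `2ε`-separated set give `V(ε) ≤ 1/N(2ε)`. Splitting
`I(t) = ∫ e^{-t d(a,b)} dμ(b)` at radius `1/t` gives `I(t) ≥ e⁻¹/N(1/t)`, i.e.
`log m_a(t) ≤ log N(1/t) + 1`. Splitting it at radius `s/2` with `s = t^(θ-1)` gives
`I(t) ≤ 1/N(s) + e^{-t^θ/2}`, and as `t^θ ≫ log t` this yields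
`log m_a(t) / log t ≥ (1 - θ) log N(s) / log(1/s) - θ` for large `t`. Both `t ↦ 1/t` and
`t ↦ t^(θ-1)` carry `t → ∞` onto `ε → 0⁺`, so comparing limsups and liminfs and letting
`θ → 0` gives the claim.
-/

open MeasureTheory Filter
open scoped ENNReal Topology

noncomputable section

open Set
open scoped NNReal
open Metric (closedBall mem_closedBall IsCover)

section LimsupLiminf

variable {α β : Type*} {l : Filter α}

lemma le_liminf_of_eventually_le_imp [CompleteLinearOrder β] {u v : α → β} {b c : β}
    (h : ∀ᶠ t in l, c ≤ v t → b ≤ u t) (hc : c < liminf v l) : b ≤ liminf u l :=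
  le_liminf_of_le (by isBoundedDefault)
    (((eventually_lt_of_lt_liminf hc).and h).mono fun _ ht => ht.2 ht.1.le)

lemma le_limsup_of_eventually_le_imp [CompleteLinearOrder β] {u v : α → β} {b c : β}
    (h : ∀ᶠ t in l, c ≤ v t → b ≤ u t) (hc : c < limsup v l) : b ≤ limsup u l :=
  le_limsup_of_frequently_le
    (((frequently_lt_of_lt_limsup (by isBoundedDefault) hc).and_eventually h).mono
      fun _ ht => ht.2 ht.1.le)

variable [l.NeBot] {u v : α → ℝ≥0∞}

lemma ENNReal.limsup_le_limsup_of_forall_eventually_le_add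
    (h : ∀ r : ℝ≥0, 0 < r → ∀ᶠ t in l, u t ≤ v t + r) : limsup u l ≤ limsup v l := by
  refine ENNReal.le_of_forall_pos_le_add fun r hr _ => ?_
  calc limsup u l ≤ limsup (fun t => v t + r) l := limsup_le_limsup (h r hr)
    _ = limsup v l + r := limsup_add_const l v _ (by isBoundedDefault) (by isBoundedDefault)

lemma ENNReal.liminf_le_liminf_of_forall_eventually_le_add
    (h : ∀ r : ℝ≥0, 0 < r → ∀ᶠ t in l, u t ≤ v t + r) : liminf u l ≤ liminf v l := by
  refine ENNReal.le_of_forall_pos_le_add fun r hr _ => ?_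
  calc liminf u l ≤ liminf (fun t => v t + r) l := liminf_le_liminf (h r hr)
    _ = liminf v l + r := liminf_add_const l v _ (by isBoundedDefault) (by isBoundedDefault)

end LimsupLiminf

lemma ENNReal.le_of_forall_lt_ofReal_sub_le {x y : ℝ≥0∞}
    (h : ∀ c : ℝ≥0, c < x → ∀ θ ∈ Ioo (0 : ℝ) 1, ENNReal.ofReal ((1 - θ) * c - θ) ≤ y) :
    x ≤ y := by
  refine ENNReal.le_of_forall_nnreal_lt fun c hc => ?_
  have hlim : Tendsto (fun θ : ℝ => ENNReal.ofReal ((1 - θ) * c - θ)) (𝓝[>] 0) (𝓝 c) := by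
    have : Tendsto (fun θ : ℝ => (1 - θ) * c - θ) (𝓝 0) (𝓝 ((1 - 0) * c - 0)) :=
      (by fun_prop : Continuous fun θ : ℝ => (1 - θ) * c - θ).tendsto 0
    simpa using (ENNReal.tendsto_ofReal this).mono_left nhdsWithin_le_nhds
  exact le_of_tendsto hlim (mem_of_superset (Ioo_mem_nhdsGT one_pos) (h c hc))

lemma map_inv_atTop_eq_nhdsGT_zero : map (fun t : ℝ => t⁻¹) atTop = 𝓝[>] 0 :=
  map_eq_of_inverse (·⁻¹) (funext inv_inv) tendsto_inv_atTop_nhdsGT_zero tendsto_inv_nhdsGT_zero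

lemma map_rpow_atTop_eq_nhdsGT_zero {r : ℝ} (hr : r < 0) :
    map (fun t : ℝ => t ^ r) atTop = 𝓝[>] 0 := by
  refine le_antisymm (tendsto_nhdsWithin_iff.2 ⟨?_, ?_⟩)
    (le_map_of_right_inverse (mba := (· ^ r⁻¹)) ?_ (tendsto_rpow_neg_nhdsGT_zero (inv_lt_zero.2 hr)))
  · simpa using tendsto_rpow_neg_atTop (neg_pos.2 hr)
  · filter_upwards [eventually_gt_atTop 0] with t ht using Real.rpow_pos_of_pos ht r
  · filter_upwards [self_mem_nhdsWithin] with x hx using Real.rpow_inv_rpow (le_of_lt hx) hr.ne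

section CoveringNumber

variable {A : Type*} [MetricSpace A]

lemma isCover_univ_iff {ε : ℝ≥0} {C : Set A} :
    IsCover ε univ C ↔ ∀ a : A, ∃ c ∈ C, dist a c ≤ ε := by
  simp [Metric.isCover_iff_subset_iUnion_closedBall, subset_def]

lemma coveringNumber_le_card_of_isCover {ε : ℝ≥0} {C : Set A} (hC : C.Finite)
    (hcov : IsCover ε univ C) : coveringNumber A ε ≤ hC.toFinset.card :=
  Nat.sInf_le ⟨hC.toFinset, rfl, by simpa using isCover_univ_iff.1 hcov⟩

variable [CompactSpace A]

lemma exists_finset_card_eq_coveringNumber {ε : ℝ} (hε : 0 < ε) :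
    ∃ s : Finset A, s.card = coveringNumber A ε ∧ ∀ a : A, ∃ c ∈ s, dist a c ≤ ε := by
  lift ε to ℝ≥0 using hε.le
  obtain ⟨C, -, hC, hcov⟩ :=
    Metric.exists_finite_isCover_of_isCompact (NNReal.coe_pos.1 hε).ne' (isCompact_univ (X := A))
  exact Nat.sInf_mem (s := {m | ∃ s : Finset A, s.card = m ∧ ∀ a : A, ∃ c ∈ s, dist a c ≤ ε})
    ⟨_, hC.toFinset, rfl, by simpa using isCover_univ_iff.1 hcov⟩

lemma coveringNumber_pos [Nonempty A] {ε : ℝ} (hε : 0 < ε) : 0 < coveringNumber A ε := by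
  obtain ⟨s, hs, hcov⟩ := exists_finset_card_eq_coveringNumber (A := A) hε
  obtain ⟨c, hc, -⟩ := hcov (Classical.arbitrary A)
  exact hs ▸ Finset.card_pos.2 ⟨c, hc⟩

end CoveringNumber

namespace MeasureTheory.Measure

variable {A : Type*} [MetricSpace A] [MeasurableSpace A]

def IsUniformlyDistributed (μ : Measure A) : Prop :=
  ∀ (x y : A) (r : ℝ), μ (closedBall x r) = μ (closedBall y r)

lemma isUniformlyDistributed_of_forall_map_eq [BorelSpace A] {μ : Measure A}
    (hhom : ∀ a b : A, ∃ f : A ≃ᵢ A, f a = b) (hinv : ∀ f : A ≃ᵢ A, map f μ = μ) :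
    μ.IsUniformlyDistributed := by
  intro x y r
  obtain ⟨f, rfl⟩ := hhom x y
  conv_rhs => rw [← hinv f, map_apply f.continuous.measurable measurableSet_closedBall,
    f.preimage_closedBall, f.symm_apply_apply]

namespace IsUniformlyDistributed

variable {μ : Measure A} (hμ : μ.IsUniformlyDistributed) (a : A)
include hμ

lemma sum_measure_closedBall (s : Finset A) (r : ℝ) :
    ∑ c ∈ s, μ (closedBall c r) = s.card * μ (closedBall a r) := by
  simp [Finset.sum_congr rfl fun c _ => hμ c a r]

variable [CompactSpace A] [IsProbabilityMeasure μ]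

lemma one_le_coveringNumber_mul_measure_closedBall {ε : ℝ} (hε : 0 < ε) :
    1 ≤ coveringNumber A ε * μ (closedBall a ε) := by
  obtain ⟨s, hs, hcov⟩ := exists_finset_card_eq_coveringNumber (A := A) hε
  calc 1 = μ univ := measure_univ.symm
    _ ≤ μ (⋃ c ∈ s, closedBall c ε) :=
        measure_mono fun x _ => by simpa [mem_closedBall] using hcov x
    _ ≤ ∑ c ∈ s, μ (closedBall c ε) := measure_biUnion_finset_le s _
    _ = coveringNumber A ε * μ (closedBall a ε) := by rw [hμ.sum_measure_closedBall, hs]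

/-- A maximal `2ε`-separated set is a `2ε`-cover whose closed `ε`-balls are disjoint. -/
lemma coveringNumber_two_mul_mul_measure_closedBall_le_one [OpensMeasurableSpace A] {ε : ℝ}
    (hε : 0 < ε) :
    coveringNumber A (2 * ε) * μ (closedBall a ε) ≤ 1 := by
  lift ε to ℝ≥0 using hε.le
  obtain ⟨N, -, hN, hNcov⟩ :=
    Metric.exists_finite_isCover_of_isCompact (NNReal.coe_pos.1 hε).ne' (isCompact_univ (X := A))
  have hpack : Metric.packingNumber (2 * ε) (univ : Set A) ≠ ⊤ :=
    ((Metric.packingNumber_two_mul_le_externalCoveringNumber ε univ).trans_lt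
      (hNcov.externalCoveringNumber_le_encard.trans_lt hN.encard_lt_top)).ne
  set C := Metric.maximalSeparatedSet (2 * ε) (univ : Set A)
  have hC : C.Finite := Set.encard_ne_top_iff.1 (by rwa [Metric.encard_maximalSeparatedSet hpack])
  have hdisj : (hC.toFinset : Set A).PairwiseDisjoint (closedBall · ε) := by
    intro x hx y hy hxy
    refine Metric.closedBall_disjoint_closedBall ?_
    have : ((2 * ε : ℝ≥0) : ℝ≥0∞) < edist x y :=
      Metric.isSeparated_maximalSeparatedSet (by simpa using hx) (by simpa using hy) hxy
    rw [edist_dist, ← ENNReal.ofReal_coe_nnreal,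
      ENNReal.ofReal_lt_ofReal_iff (dist_pos.2 hxy)] at this
    push_cast at this
    linarith
  calc (coveringNumber A (2 * ε) : ℝ≥0∞) * μ (closedBall a ε)
      ≤ hC.toFinset.card * μ (closedBall a ε) := by
        gcongr
        exact_mod_cast coveringNumber_le_card_of_isCover hC
          (by exact_mod_cast Metric.isCover_maximalSeparatedSet hpack)
    _ = μ (⋃ c ∈ hC.toFinset, closedBall c ε) := by
        rw [measure_biUnion_finset hdisj fun _ _ => measurableSet_closedBall,
          hμ.sum_measure_closedBall]
    _ ≤ 1 := prob_le_one

end IsUniformlyDistributed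

end MeasureTheory.Measure

section ExpKernel

open Real

variable {A : Type*} [MetricSpace A] [MeasurableSpace A] [OpensMeasurableSpace A]
  [CompactSpace A] (μ : Measure A) (a : A)

lemma integrable_exp_neg_mul_dist [IsFiniteMeasure μ] (t : ℝ) :
    Integrable (fun b => exp (-t * dist a b)) μ :=
  (by fun_prop : Continuous fun b => exp (-t * dist a b)).integrable_of_hasCompactSupport
    (HasCompactSupport.of_compactSpace _)

lemma exp_neg_one_mul_measureReal_closedBall_le_integral [IsFiniteMeasure μ] {t : ℝ}
    (ht : 0 < t) :
    exp (-1) * μ.real (closedBall a t⁻¹) ≤ ∫ b, exp (-t * dist a b) ∂μ := by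
  rw [mul_comm, ← smul_eq_mul, ← integral_indicator_const _ measurableSet_closedBall]
  refine integral_mono ((integrable_const _).indicator measurableSet_closedBall)
    (integrable_exp_neg_mul_dist μ a t) fun b => ?_
  by_cases hb : b ∈ closedBall a t⁻¹
  · rw [indicator_of_mem hb, exp_le_exp, neg_mul, neg_le_neg_iff, dist_comm,
      ← le_div_iff₀' ht, one_div]
    exact mem_closedBall.1 hb
  · rw [indicator_of_notMem hb]
    positivity

lemma integral_exp_neg_mul_dist_le [IsProbabilityMeasure μ] {t : ℝ} (ht : 0 ≤ t) (s : ℝ) :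
    ∫ b, exp (-t * dist a b) ∂μ ≤ μ.real (closedBall a s) + exp (-(t * s)) := by
  have hind : Integrable ((closedBall a s).indicator 1) μ :=
    (integrable_const (1 : ℝ)).indicator measurableSet_closedBall
  calc ∫ b, exp (-t * dist a b) ∂μ
      ≤ ∫ b, ((closedBall a s).indicator 1 b + exp (-(t * s))) ∂μ := by
        refine integral_mono (integrable_exp_neg_mul_dist μ a t) (hind.add (integrable_const _))
          fun b => ?_
        by_cases hb : b ∈ closedBall a s
        · have : exp (-t * dist a b) ≤ 1 :=
            exp_le_one_iff.2 (by nlinarith [dist_nonneg (x := a) (y := b)])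
          simp only [indicator_of_mem hb, Pi.one_apply]
          linarith [exp_pos (-(t * s))]
        · have hs : s < dist a b := by simpa [dist_comm] using hb
          simp only [indicator_of_notMem hb, zero_add, exp_le_exp]
          nlinarith
    _ = μ.real (closedBall a s) + exp (-(t * s)) := by
        rw [integral_add hind (integrable_const _), integral_indicator_one measurableSet_closedBall]
        simp

end ExpKernel

def coveringRatio (A : Type*) [MetricSpace A] (ε : ℝ) : ℝ≥0∞ :=
  ENNReal.ofReal (Real.log (coveringNumber A ε) / Real.log (1 / ε))

def kernelRatio {A : Type*} [MetricSpace A] [MeasurableSpace A] (μ : Measure A) (a : A)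
    (t : ℝ) : ℝ≥0∞ :=
  ENNReal.ofReal (Real.log (∫ b, Real.exp (-t * dist a b) ∂μ)⁻¹ / Real.log t)

namespace MeasureTheory.Measure.IsUniformlyDistributed

open Real

variable {A : Type*} [MetricSpace A] [MeasurableSpace A] [OpensMeasurableSpace A]
  [CompactSpace A] {μ : Measure A} [IsProbabilityMeasure μ] (hμ : μ.IsUniformlyDistributed) (a : A)
include hμ

lemma log_inv_integral_exp_le {t : ℝ} (ht : 0 < t) :
    log (∫ b, exp (-t * dist a b) ∂μ)⁻¹ ≤ log (coveringNumber A t⁻¹) + 1 := by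
  set I := ∫ b, exp (-t * dist a b) ∂μ
  set N : ℝ := (coveringNumber A t⁻¹ : ℝ)
  have hI : 0 < I := integral_exp_pos (integrable_exp_neg_mul_dist μ a t)
  have : Nonempty A := ⟨a⟩
  have hN : 0 < N := Nat.cast_pos.2 (coveringNumber_pos (A := A) (inv_pos.2 ht))
  have hball : 1 ≤ N * μ.real (closedBall a t⁻¹) := by
    simpa [measureReal_def] using ENNReal.toReal_mono (by finiteness)
      (hμ.one_le_coveringNumber_mul_measure_closedBall a (inv_pos.2 ht))
  have hlow := exp_neg_one_mul_measureReal_closedBall_le_integral μ a ht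
  have hinv : I⁻¹ ≤ exp 1 * N := by
    rw [inv_le_iff_one_le_mul₀ hI]
    calc 1 ≤ N * μ.real (closedBall a t⁻¹) := hball
      _ = exp 1 * N * (exp (-1) * μ.real (closedBall a t⁻¹)) := by
        rw [← mul_assoc, mul_right_comm _ N, ← exp_add]; simp
      _ ≤ exp 1 * N * I := by gcongr
  calc log I⁻¹ ≤ log (exp 1 * N) := log_le_log (inv_pos.2 hI) hinv
    _ = log N + 1 := by rw [log_mul (exp_ne_zero 1) hN.ne', log_exp, add_comm]

lemma min_log_sub_log_two_le_log_inv_integral_exp {t s : ℝ} (ht : 0 < t) (hs : 0 < s) :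
    min (log (coveringNumber A s)) (t * s / 2) - log 2 ≤ log (∫ b, exp (-t * dist a b) ∂μ)⁻¹ := by
  set I := ∫ b, exp (-t * dist a b) ∂μ
  set N : ℝ := (coveringNumber A s : ℝ)
  have hI : 0 < I := integral_exp_pos (integrable_exp_neg_mul_dist μ a t)
  have : Nonempty A := ⟨a⟩
  have hN : 0 < N := Nat.cast_pos.2 (coveringNumber_pos (A := A) hs)
  have hball : N * μ.real (closedBall a (s / 2)) ≤ 1 := by
    have := hμ.coveringNumber_two_mul_mul_measure_closedBall_le_one a (half_pos hs)
    rw [mul_div_cancel₀ s two_ne_zero] at this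
    simpa [measureReal_def] using ENNReal.toReal_mono ENNReal.one_ne_top this
  set m := min (log N) (t * s / 2)
  have hup : I ≤ 2 * exp (-m) := by
    have h1 : μ.real (closedBall a (s / 2)) ≤ exp (-log N) := by
      rw [exp_neg, exp_log hN, ← one_div, le_div_iff₀' hN]
      exact hball
    have := integral_exp_neg_mul_dist_le μ a ht.le (s / 2)
    have h2 : exp (-log N) ≤ exp (-m) := exp_le_exp.2 (neg_le_neg (min_le_left _ _))
    have h3 : exp (-(t * (s / 2))) ≤ exp (-m) :=
      exp_le_exp.2 (by rw [← mul_div_assoc]; exact neg_le_neg (min_le_right _ _))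
    linarith
  have := log_le_log hI hup
  rw [log_mul two_ne_zero (exp_ne_zero _), log_exp] at this
  rw [log_inv]
  linarith

lemma eventually_kernelRatio_le_coveringRatio_inv_add (r : ℝ≥0) (hr : 0 < r) :
    ∀ᶠ t in atTop, kernelRatio μ a t ≤ coveringRatio A t⁻¹ + r := by
  filter_upwards [eventually_gt_atTop 1,
    tendsto_log_atTop.inv_tendsto_atTop.eventually (gt_mem_nhds (NNReal.coe_pos.2 hr))]
    with t ht hlog
  have hlt : 0 < log t := log_pos ht
  have := hμ.log_inv_integral_exp_le a (t := t) (by linarith)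
  calc kernelRatio μ a t
      ≤ ENNReal.ofReal (log (coveringNumber A t⁻¹) / log t + (log t)⁻¹) := by
        refine ENNReal.ofReal_le_ofReal ?_
        rw [← one_div (log t), ← add_div]
        gcongr
    _ ≤ coveringRatio A t⁻¹ + r := by
        refine ENNReal.ofReal_add_le.trans ?_
        rw [coveringRatio, one_div, inv_inv, ← ENNReal.ofReal_coe_nnreal]
        gcongr
        exact hlog.le

lemma eventually_ofReal_le_kernelRatio {θ : ℝ} (hθ : θ ∈ Ioo 0 1) (c : ℝ≥0) :
    ∀ᶠ t in atTop, c ≤ coveringRatio A (t ^ (θ - 1)) →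
      ENNReal.ofReal ((1 - θ) * c - θ) ≤ kernelRatio μ a t := by
  have hpow : ∀ᶠ t in atTop, 2 * (c * (1 - θ) * log t) ≤ t ^ θ := by
    filter_upwards [((isLittleO_log_rpow_atTop hθ.1).const_mul_left (2 * (c * (1 - θ)))).bound
      one_pos, eventually_gt_atTop 0] with t h ht
    calc 2 * (c * (1 - θ) * log t) ≤ ‖2 * (c * (1 - θ)) * log t‖ := by
          rw [← mul_assoc]; exact le_abs_self _
      _ ≤ t ^ θ := by rwa [one_mul, norm_of_nonneg (rpow_nonneg ht.le _)] at h
  filter_upwards [eventually_gt_atTop 1, hpow,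
    tendsto_log_atTop.eventually_ge_atTop (log 2 / θ)] with t ht hpow hlog2 hc
  have ht0 : 0 < t := by linarith
  have hlt : 0 < log t := log_pos ht
  set s := t ^ (θ - 1)
  have hs : 0 < s := rpow_pos_of_pos ht0 _
  have hts : t * s = t ^ θ := by
    rw [← rpow_one_add' ht0.le (by linarith [hθ.1])]
    norm_num
  have hN : c * ((1 - θ) * log t) ≤ log (coveringNumber A s) := by
    have hlogs : log (1 / s) = (1 - θ) * log t := by
      rw [one_div, log_inv, log_rpow ht0]
      ring
    rw [coveringRatio, hlogs, ← ENNReal.ofReal_coe_nnreal,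
      ENNReal.ofReal_le_ofReal_iff (div_nonneg (log_natCast_nonneg _) (by nlinarith [hθ.2])),
      le_div_iff₀ (by nlinarith [hθ.2])] at hc
    exact hc
  have hmin := hμ.min_log_sub_log_two_le_log_inv_integral_exp a ht0 hs
  have hlow : c * ((1 - θ) * log t) ≤ min (log (coveringNumber A s)) (t * s / 2) :=
    le_min hN (by rw [hts]; linarith)
  rw [div_le_iff₀ hθ.1] at hlog2
  refine ENNReal.ofReal_le_ofReal ((le_div_iff₀ hlt).2 ?_)
  linarith

theorem limsup_kernelRatio_le : limsup (kernelRatio μ a) atTop ≤ upperMinkowski A :=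
  calc limsup (kernelRatio μ a) atTop ≤ limsup (coveringRatio A ∘ (·⁻¹)) atTop :=
        ENNReal.limsup_le_limsup_of_forall_eventually_le_add
          (hμ.eventually_kernelRatio_le_coveringRatio_inv_add a)
    _ = upperMinkowski A := by rw [limsup_comp, map_inv_atTop_eq_nhdsGT_zero]; rfl

theorem liminf_kernelRatio_le : liminf (kernelRatio μ a) atTop ≤ lowerMinkowski A :=
  calc liminf (kernelRatio μ a) atTop ≤ liminf (coveringRatio A ∘ (·⁻¹)) atTop :=
        ENNReal.liminf_le_liminf_of_forall_eventually_le_add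
          (hμ.eventually_kernelRatio_le_coveringRatio_inv_add a)
    _ = lowerMinkowski A := by rw [liminf_comp, map_inv_atTop_eq_nhdsGT_zero]; rfl

theorem upperMinkowski_le_limsup_kernelRatio :
    upperMinkowski A ≤ limsup (kernelRatio μ a) atTop :=
  ENNReal.le_of_forall_lt_ofReal_sub_le fun c hc θ hθ =>
    le_limsup_of_eventually_le_imp (hμ.eventually_ofReal_le_kernelRatio a hθ c) <| by
      change _ < limsup (coveringRatio A ∘ (· ^ (θ - 1))) atTop
      rwa [limsup_comp, map_rpow_atTop_eq_nhdsGT_zero (by linarith [hθ.2])]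

theorem lowerMinkowski_le_liminf_kernelRatio :
    lowerMinkowski A ≤ liminf (kernelRatio μ a) atTop :=
  ENNReal.le_of_forall_lt_ofReal_sub_le fun c hc θ hθ =>
    le_liminf_of_eventually_le_imp (hμ.eventually_ofReal_le_kernelRatio a hθ c) <| by
      change _ < liminf (coveringRatio A ∘ (· ^ (θ - 1))) atTop
      rwa [liminf_comp, map_rpow_atTop_eq_nhdsGT_zero (by linarith [hθ.2])]

end MeasureTheory.Measure.IsUniformlyDistributed

theorem stmt18_general (A : Type*) [MetricSpace A] [MeasurableSpace A] [BorelSpace A]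
    [CompactSpace A]
    (hhom : ∀ a b : A, ∃ f : A ≃ᵢ A, f a = b)
    (μ : Measure A) [IsProbabilityMeasure μ]
    (hinv : ∀ f : A ≃ᵢ A, Measure.map f μ = μ) (a : A) :
    limsup (fun t : ℝ =>
        ENNReal.ofReal (Real.log (∫ b, Real.exp (-t * dist a b) ∂μ)⁻¹ / Real.log t)) atTop
      = upperMinkowski A ∧
    liminf (fun t : ℝ =>
        ENNReal.ofReal (Real.log (∫ b, Real.exp (-t * dist a b) ∂μ)⁻¹ / Real.log t)) atTop
      = lowerMinkowski A := by
  have hμ := Measure.isUniformlyDistributed_of_forall_map_eq hhom hinv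
  exact ⟨le_antisymm (hμ.limsup_kernelRatio_le a) (hμ.upperMinkowski_le_limsup_kernelRatio a),
    le_antisymm (hμ.liminf_kernelRatio_le a) (hμ.lowerMinkowski_le_liminf_kernelRatio a)⟩

/-- Let `A` be a nonempty compact homogeneous metric space and `μ` a
Borel probability measure on `A` invariant under every self-isometry.  With
`m_a(t) = (∫ e^{-t d(a,b)} dμ(b))⁻¹`, for every `a ∈ A` the limsup (resp. liminf) of
`log m_a(t)/log t` as `t → ∞` is the upper (resp. lower) Minkowski dimension of `A`. -/
theorem stmt18 (A : Type*) [MetricSpace A] [MeasurableSpace A] [BorelSpace A]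
    [CompactSpace A] [Nonempty A]
    (hhom : ∀ a b : A, ∃ f : A ≃ᵢ A, f a = b)
    (μ : Measure A) [IsProbabilityMeasure μ]
    (hinv : ∀ f : A ≃ᵢ A, Measure.map f μ = μ) (a : A) :
    limsup (fun t : ℝ =>
        ENNReal.ofReal (Real.log (∫ b, Real.exp (-t * dist a b) ∂μ)⁻¹ / Real.log t)) atTop
      = upperMinkowski A ∧
    liminf (fun t : ℝ =>
        ENNReal.ofReal (Real.log (∫ b, Real.exp (-t * dist a b) ∂μ)⁻¹ / Real.log t)) atTop
      = lowerMinkowski A :=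
  stmt18_general A hhom μ hinv a
end
end
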